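/- arXiv:2011.01332 — 2 statements merged into one kernel-verified Lean document; each statement's English description precedes it below -/
import Mathlib

section
/- Let a > 0, b > 0 and m > 0, let X be a random variable following the Pearson type III distribution with parameters (a, b, m), and let Z = 1/(1 + e^{−X}). Then for every integer n ≥ 1, the series Σ_{l=0}^{∞} C(n + l − 1, l) (−1)^{l} e^{−m l} (1 + l/b)^{−a} converges absolutely and E[Z^n] = (1/Γ(a)) ∫_{0}^{∞} (1 + e^{−x/b − m})^{−n} x^{a−1} e^{−x} dx = Σ_{l=0}^{∞} C(n + l − 1, l) (−1)^{l} e^{−m l} (1 + l/b)^{−a}, where C(n + l − 1, l) is the binomial coefficient. -/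
/-!
Pull the moment back along the law of `X` and substitute `y = b (x - m)`: this turns `E[Z^n]` into
a Gamma-type integral of `(1 + e^{-y/b - m})^{-n}`. Since `e^{-y/b - m} ≤ e^{-m} < 1`, the negative
binomial series expands this factor as `Σ_l C(n+l-1, l) (-1)^l e^{-ml} e^{-ly/b}`, and each term
integrates against `y^{a-1} e^{-y}` to `Γ(a) (1 + l/b)^{-a}`. The coefficients are dominated by
the summable series `C(n+l-1, l) e^{-ml}`, which justifies integrating term by term.
-/

open MeasureTheory ProbabilityTheory Set

noncomputable def pearsonPDF (a b m : ℝ) (x : ℝ) : ℝ :=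
  if (0 < b ∧ m < x) ∨ (b < 0 ∧ x < m) then
    |b| / Real.Gamma a * (b * (x - m)) ^ (a - 1) * Real.exp (-(b * (x - m)))
  else 0

open Real

lemma Nat.add_sub_one_choose {n : ℕ} (hn : 1 ≤ n) (l : ℕ) :
    (n + l - 1).choose l = (l + (n - 1)).choose (n - 1) := by
  rw [show n + l - 1 = l + (n - 1) by omega, Nat.choose_symm_add]

lemma hasSum_choose_mul_neg_pow {𝕜 : Type*} [NormedDivisionRing 𝕜] {n : ℕ} (hn : 1 ≤ n) {r : 𝕜}
    (hr : ‖r‖ < 1) :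
    HasSum (fun l : ℕ => ((n + l - 1).choose l : 𝕜) * (-r) ^ l) ((1 + r) ^ (-(n : ℤ))) := by
  have h := hasSum_choose_mul_geometric_of_norm_lt_one' (n - 1) (r := -r) (by rwa [norm_neg])
  simp only [Nat.add_sub_one_choose hn]
  convert h using 1
  rw [sub_neg_eq_add, Nat.sub_add_cancel hn, zpow_neg, zpow_natCast, Ring.inverse_eq_inv,
    inv_pow]

lemma summable_norm_choose_mul_neg_one_pow_mul_exp {n : ℕ} (hn : 1 ≤ n) {m : ℝ} (hm : 0 < m) :
    Summable fun l : ℕ => ‖((n + l - 1).choose l : ℝ) * (-1) ^ l * exp (-(m * l))‖ := by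
  have hr : ‖exp (-m)‖ < 1 := by
    rw [Real.norm_of_nonneg (exp_pos _).le, exp_lt_one_iff]
    linarith
  refine (summable_choose_mul_geometric_of_norm_lt_one (n - 1) hr).congr fun l => ?_
  rw [norm_mul, norm_mul, norm_pow, norm_neg, norm_one, one_pow, mul_one, Real.norm_natCast,
    Real.norm_of_nonneg (exp_pos _).le, Nat.add_sub_one_choose hn, ← exp_nat_mul]
  ring_nf

lemma one_add_exp_neg_zpow_eq_tsum {n : ℕ} (hn : 1 ≤ n) {b m x : ℝ} (hx : 0 < x / b + m) :
    (1 + exp (-x / b - m)) ^ (-(n : ℤ)) =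
      ∑' l : ℕ, ((n + l - 1).choose l : ℝ) * (-1) ^ l * exp (-(m * l)) * exp (-(l / b * x)) := by
  have hr : ‖exp (-x / b - m)‖ < 1 := by
    rw [Real.norm_of_nonneg (exp_pos _).le, exp_lt_one_iff]
    linarith [neg_div b x]
  rw [← (hasSum_choose_mul_neg_pow hn hr).tsum_eq]
  congr 1 with l
  rw [neg_pow (exp _), ← exp_nat_mul, mul_assoc, ← exp_add]
  ring_nf

lemma integral_Ioi_eq_inv_smul_integral_Ioi_zero {E : Type*} [NormedAddCommGroup E]
    [NormedSpace ℝ E] {b : ℝ} (hb : 0 < b) (m : ℝ) (h : ℝ → E) :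
    ∫ x in Ioi m, h x = b⁻¹ • ∫ y in Ioi 0, h (m + y / b) := by
  have hshift := (measurePreserving_add_left volume m).setIntegral_preimage_emb
    (measurableEmbedding_addLeft m) h (Ioi m)
  have hscale := integral_comp_mul_left_Ioi' (fun y => h (m + y)) 0 (inv_pos.2 hb)
  simp only [preimage_const_add_Ioi, sub_self, mul_zero] at hshift hscale
  rw [← hshift, ← hscale]
  simp only [div_eq_inv_mul]

lemma integral_comp_eq_integral_mul_of_map_eq_withDensity {Ω : Type*} [MeasurableSpace Ω]
    {μ : Measure Ω} {X : Ω → ℝ} (hX : AEMeasurable X μ) {f : ℝ → ℝ} (hf : Measurable f)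
    (hf₀ : ∀ x, 0 ≤ f x) (hlaw : μ.map X = volume.withDensity fun x => ENNReal.ofReal (f x))
    {g : ℝ → ℝ} (hg : Measurable g) :
    ∫ ω, g (X ω) ∂μ = ∫ x, f x * g x := by
  rw [← integral_map hX hg.aestronglyMeasurable, hlaw,
    integral_withDensity_eq_integral_toReal_smul hf.ennreal_ofReal
      (ae_of_all _ fun _ => ENNReal.ofReal_lt_top)]
  simp only [ENNReal.toReal_ofReal (hf₀ _), smul_eq_mul]

lemma one_add_rpow_neg_le_one {a t : ℝ} (ht : 0 ≤ t) (ha : 0 ≤ a) : (1 + t) ^ (-a) ≤ 1 :=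
  rpow_le_one_of_one_le_of_nonpos (by linarith) (by linarith)

section GammaTransform

variable {a : ℝ} {c t : ℕ → ℝ}

lemma summable_mul_one_add_rpow_neg (ha : 0 ≤ a) (hc : Summable fun l => ‖c l‖)
    (ht : ∀ l, 0 ≤ t l) : Summable fun l => c l * (1 + t l) ^ (-a) := by
  refine Summable.of_norm_bounded hc fun l => ?_
  rw [norm_mul, Real.norm_of_nonneg (rpow_nonneg (by linarith [ht l]) _)]
  exact mul_le_of_le_one_right (norm_nonneg _) (one_add_rpow_neg_le_one (ht l) ha)

lemma integrableOn_rpow_mul_exp_neg_mul_Ioi (ha : 0 < a) {s : ℝ} (hs : 0 < s) :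
    IntegrableOn (fun x : ℝ => x ^ (a - 1) * exp (-(s * x))) (Ioi 0) := by
  simpa [neg_mul] using
    integrableOn_rpow_mul_exp_neg_mul_rpow (by linarith : -1 < a - 1) zero_lt_one hs

lemma integral_rpow_mul_exp_neg_one_add_mul_Ioi (ha : 0 < a) {s : ℝ} (hs : 0 ≤ s) :
    ∫ x in Ioi 0, x ^ (a - 1) * exp (-((1 + s) * x)) = Gamma a * (1 + s) ^ (-a) := by
  rw [integral_rpow_mul_exp_neg_mul_Ioi ha (by linarith), one_div,
    inv_rpow (by linarith), ← rpow_neg (by linarith), mul_comm]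

lemma integral_Ioi_tsum_mul_exp_mul_rpow_mul_exp_neg (ha : 0 < a)
    (hc : Summable fun l => ‖c l‖) (ht : ∀ l, 0 ≤ t l) :
    ∫ x in Ioi 0, (∑' l, c l * exp (-(t l * x))) * x ^ (a - 1) * exp (-x) =
      Gamma a * ∑' l, c l * (1 + t l) ^ (-a) := by
  set F : ℕ → ℝ → ℝ := fun l x => c l * (x ^ (a - 1) * exp (-((1 + t l) * x)))
  have hF : ∀ x, (∑' l, c l * exp (-(t l * x))) * x ^ (a - 1) * exp (-x) = ∑' l, F l x := by
    intro x
    rw [← tsum_mul_right, ← tsum_mul_right]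
    congr 1 with l
    simp only [F]
    rw [show -((1 + t l) * x) = -(t l * x) + -x by ring, exp_add]
    ring
  have hF_int : ∀ l, IntegrableOn (F l) (Ioi 0) := fun l =>
    (integrableOn_rpow_mul_exp_neg_mul_Ioi ha (by linarith [ht l])).const_mul _
  have hF_norm : ∀ l, ∫ x in Ioi 0, ‖F l x‖ = ‖c l‖ * (Gamma a * (1 + t l) ^ (-a)) := by
    intro l
    rw [← integral_rpow_mul_exp_neg_one_add_mul_Ioi ha (ht l), ← integral_const_mul]
    refine setIntegral_congr_fun measurableSet_Ioi fun x hx => ?_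
    have : 0 ≤ x ^ (a - 1) * exp (-((1 + t l) * x)) := by
      have := rpow_nonneg (le_of_lt (mem_Ioi.1 hx)) (a - 1); positivity
    rw [norm_mul, Real.norm_of_nonneg this]
  have hF_sum : Summable fun l => ∫ x in Ioi 0, ‖F l x‖ := by
    refine Summable.of_nonneg_of_le (fun l => integral_nonneg fun x => norm_nonneg _)
      (fun l => ?_) (hc.mul_right (Gamma a))
    rw [hF_norm]
    gcongr
    exact mul_le_of_le_one_right (Gamma_pos_of_pos ha).le (one_add_rpow_neg_le_one (ht l) ha.le)
  simp_rw [hF, ← integral_tsum_of_summable_integral_norm hF_int hF_sum, F, integral_const_mul,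
    integral_rpow_mul_exp_neg_one_add_mul_Ioi ha (ht _), ← tsum_mul_left]
  congr 1 with l
  ring

end GammaTransform

lemma pearsonPDF_nonneg {a : ℝ} (ha : 0 < a) (b m x : ℝ) : 0 ≤ pearsonPDF a b m x := by
  unfold pearsonPDF
  split_ifs with h
  · have hΓ := Gamma_pos_of_pos ha
    have : 0 ≤ b * (x - m) := by
      rcases h with ⟨hb, hx⟩ | ⟨hb, hx⟩ <;> nlinarith
    positivity
  · exact le_rfl

lemma measurable_pearsonPDF (a b m : ℝ) : Measurable (pearsonPDF a b m) := by
  refine Measurable.ite ?_ (by fun_prop) measurable_const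
  exact ((MeasurableSet.const _).inter measurableSet_Ioi).union
    ((MeasurableSet.const _).inter measurableSet_Iio)

lemma pearsonPDF_of_pos {b : ℝ} (hb : 0 < b) (a m : ℝ) :
    pearsonPDF a b m =
      (Ioi m).indicator fun x => b / Gamma a * (b * (x - m)) ^ (a - 1) * exp (-(b * (x - m))) := by
  ext x
  by_cases hx : m < x
  · simp [pearsonPDF, hb, hx, abs_of_pos hb]
  · simp [pearsonPDF, hx, hb.not_gt]

lemma integral_pearsonPDF_mul {b : ℝ} (hb : 0 < b) (a m : ℝ) (g : ℝ → ℝ) :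
    ∫ x, pearsonPDF a b m x * g x =
      1 / Gamma a * ∫ y in Ioi 0, g (m + y / b) * y ^ (a - 1) * exp (-y) := by
  simp_rw [pearsonPDF_of_pos hb, ← indicator_mul_left]
  rw [integral_indicator measurableSet_Ioi, integral_Ioi_eq_inv_smul_integral_Ioi_zero hb,
    smul_eq_mul, ← integral_const_mul, ← integral_const_mul]
  refine setIntegral_congr_fun measurableSet_Ioi fun y _ => ?_
  have hy : b * (m + y / b - m) = y := by field_simp; ring
  simp only [hy]
  field_simp

theorem logitPearsonIII_moments_pos_general {Ω : Type*} [MeasureSpace Ω]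
    (a b m : ℝ) (ha : 0 < a) (hb : 0 < b)
    (hm : 0 < m) (X : Ω → ℝ) (hX : Measurable X)
    (hlaw : Measure.map X ℙ = volume.withDensity fun x => ENNReal.ofReal (pearsonPDF a b m x))
    (n : ℕ) (hn : 1 ≤ n) :
    Summable (fun l : ℕ =>
      ((n + l - 1).choose l : ℝ) * (-1) ^ l * Real.exp (-(m * l)) * (1 + l / b) ^ (-a)) ∧
    ∫ ω, (1 / (1 + Real.exp (-X ω))) ^ n ∂ℙ =
      (1 / Real.Gamma a) *
        ∫ x in Ioi (0 : ℝ),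
          (1 + Real.exp (-x / b - m)) ^ (-(n : ℤ)) * x ^ (a - 1) * Real.exp (-x) ∧
    (1 / Real.Gamma a) *
        ∫ x in Ioi (0 : ℝ),
          (1 + Real.exp (-x / b - m)) ^ (-(n : ℤ)) * x ^ (a - 1) * Real.exp (-x) =
      ∑' l : ℕ,
        ((n + l - 1).choose l : ℝ) * (-1) ^ l * Real.exp (-(m * l)) * (1 + l / b) ^ (-a) := by
  have hc := summable_norm_choose_mul_neg_one_pow_mul_exp hn hm
  have ht : ∀ l : ℕ, 0 ≤ (l : ℝ) / b := fun l => by positivity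
  refine ⟨summable_mul_one_add_rpow_neg ha.le hc ht, ?_, ?_⟩
  · rw [integral_comp_eq_integral_mul_of_map_eq_withDensity hX.aemeasurable
      (measurable_pearsonPDF a b m) (pearsonPDF_nonneg ha b m) hlaw
      (g := fun x => (1 / (1 + exp (-x))) ^ n) (by fun_prop), integral_pearsonPDF_mul hb]
    congr 1
    refine setIntegral_congr_fun measurableSet_Ioi fun y _ => ?_
    rw [show -(m + y / b) = -y / b - m by ring, one_div, inv_pow, zpow_neg, zpow_natCast]
  · have hseries : ∀ x ∈ Ioi (0 : ℝ),
        (1 + exp (-x / b - m)) ^ (-(n : ℤ)) * x ^ (a - 1) * exp (-x) =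
          (∑' l : ℕ, ((n + l - 1).choose l : ℝ) * (-1) ^ l * exp (-(m * l)) *
            exp (-(l / b * x))) * x ^ (a - 1) * exp (-x) := fun x hx => by
      have := mem_Ioi.1 hx
      rw [one_add_exp_neg_zpow_eq_tsum hn (by positivity)]
    rw [setIntegral_congr_fun measurableSet_Ioi hseries,
      integral_Ioi_tsum_mul_exp_mul_rpow_mul_exp_neg ha hc ht, ← mul_assoc,
      one_div_mul_cancel (Gamma_pos_of_pos ha).ne', one_mul]

/-- **Moments of the logit Pearson type III distribution for `b > 0`, `m > 0`.**
If `X ~ PearsonIII(a, b, m)` and `Z = 1/(1 + e^{-X})`, then for every `n ≥ 1` the series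
`Σ_{l=0}^∞ C(n+l-1, l) (-1)^l e^{-ml} (1 + l/b)^{-a}` converges absolutely and
`E[Z^n] = (1/Γ(a)) ∫_0^∞ (1 + e^{-x/b - m})^{-n} x^{a-1} e^{-x} dx
        = Σ_{l=0}^∞ C(n+l-1, l) (-1)^l e^{-ml} (1 + l/b)^{-a}`. -/
theorem logitPearsonIII_moments_pos {Ω : Type*} [MeasureSpace Ω]
    [IsProbabilityMeasure (ℙ : Measure Ω)] (a b m : ℝ) (ha : 0 < a) (hb : 0 < b)
    (hm : 0 < m) (X : Ω → ℝ) (hX : Measurable X)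
    (hlaw : Measure.map X ℙ = volume.withDensity fun x => ENNReal.ofReal (pearsonPDF a b m x))
    (n : ℕ) (hn : 1 ≤ n) :
    Summable (fun l : ℕ =>
      ((n + l - 1).choose l : ℝ) * (-1) ^ l * Real.exp (-(m * l)) * (1 + l / b) ^ (-a)) ∧
    ∫ ω, (1 / (1 + Real.exp (-X ω))) ^ n ∂ℙ =
      (1 / Real.Gamma a) *
        ∫ x in Ioi (0 : ℝ),
          (1 + Real.exp (-x / b - m)) ^ (-(n : ℤ)) * x ^ (a - 1) * Real.exp (-x) ∧
    (1 / Real.Gamma a) *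
        ∫ x in Ioi (0 : ℝ),
          (1 + Real.exp (-x / b - m)) ^ (-(n : ℤ)) * x ^ (a - 1) * Real.exp (-x) =
      ∑' l : ℕ,
        ((n + l - 1).choose l : ℝ) * (-1) ^ l * Real.exp (-(m * l)) * (1 + l / b) ^ (-a) :=
  logitPearsonIII_moments_pos_general a b m ha hb hm X hX hlaw n hn
end

section
/- Let L ≥ 1, let a_i > 0, b_i > 0, l_i > 0, p_i > 0 for i = 1, …, L, and let A, B, P_s be positive constants. Assume the ratios b_i/(l_i p_i) are all equal to a common value β > 0, and set sa = Σ_{i=1}^{L} a_i. Let G_1, …, G_L be independent random variables with G_i following the Gamma(a_i, b_i) distribution, and define the harvested power Q = P_s(1 + e^{AB}) / (e^{AB}(1 + e^{−A(Σ_{i=1}^{L} l_i p_i G_i − B)})) − P_s e^{−AB}. Then for every q with 0 < q < P_s, P(Q ≤ q) = (1/Γ(sa)) γ(sa, −(β/A) (ln(P_s(1 + e^{AB})/(e^{AB}(q + P_s e^{−AB})) − 1) − A B)), where γ(a, u) = ∫_0^u t^{a−1} e^{−t} dt is the lower incomplete gamma function. -/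
open MeasureTheory ProbabilityTheory Set

/-- The Gamma density with shape `a > 0` and rate `b > 0`:
`(b^a/Γ(a)) x^{a-1} e^{-bx}` on `(0, ∞)`, and `0` elsewhere. -/
noncomputable def gammaPDF (a b x : ℝ) : ℝ :=
  if 0 < x then b ^ a / Real.Gamma a * x ^ (a - 1) * Real.exp (-(b * x)) else 0

/-!
Scaling a Gamma(a, b) variable by `c > 0` gives a Gamma(a, b/c) variable, so the equal ratios make
every `l_i p_i G_i` a Gamma(a_i, β) variable. Gamma laws with a common rate are closed under
convolution (the substitution `y = z s` turns the convolution of the densities into a Beta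
integral), hence `Σ l_i p_i G_i` is Gamma(sa, β). The harvested power is an increasing function of
`Σ l_i p_i G_i` vanishing at `0`, so `{Q ≤ q}` is the event `Σ l_i p_i G_i ≤ c` for an explicit
`c ≥ 0`, whose probability is `γ(sa, β c) / Γ(sa)`.
-/

open scoped ENNReal

theorem Real.lintegral_comp_mul_left {c : ℝ} (hc : c ≠ 0) (f : ℝ → ℝ≥0∞) :
    ∫⁻ x, f (c * x) = ENNReal.ofReal |c⁻¹| * ∫⁻ x, f x := by
  rw [← smul_eq_mul, ← lintegral_smul_measure, ← Real.map_volume_mul_left hc]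
  exact (lintegral_map_equiv f (MeasurableEquiv.mulLeft₀ c hc)).symm

theorem Real.map_const_mul_withDensity {c : ℝ} (hc : c ≠ 0) {f g : ℝ → ℝ≥0∞}
    (hfg : ∀ x, g (c * x) = ENNReal.ofReal |c⁻¹| * f x) :
    (volume.withDensity f).map (c * ·) = volume.withDensity g := by
  ext s hs
  have hpre : MeasurableSet ((c * ·) ⁻¹' s) := measurable_const_mul c hs
  have hc' : ENNReal.ofReal |c| * ENNReal.ofReal |c⁻¹| = 1 := by
    rw [← ENNReal.ofReal_mul (abs_nonneg c), ← abs_mul, mul_inv_cancel₀ hc, abs_one,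
      ENNReal.ofReal_one]
  calc (volume.withDensity f).map (c * ·) s
      = ∫⁻ x, ((c * ·) ⁻¹' s).indicator f x := by
        rw [Measure.map_apply (measurable_const_mul c) hs, withDensity_apply _ hpre,
          lintegral_indicator hpre]
    _ = ENNReal.ofReal |c| * ∫⁻ x, s.indicator g (c * x) := by
        rw [← lintegral_const_mul' _ _ ENNReal.ofReal_ne_top]
        congr 1 with x
        by_cases hx : c * x ∈ s
        · rw [indicator_of_mem hx, indicator_of_mem (show x ∈ (c * ·) ⁻¹' s from hx), hfg,
            ← mul_assoc, hc', one_mul]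
        · rw [indicator_of_notMem hx, indicator_of_notMem (show x ∉ (c * ·) ⁻¹' s from hx),
            mul_zero]
    _ = volume.withDensity g s := by
        rw [Real.lintegral_comp_mul_left hc, ← mul_assoc, hc', one_mul,
          lintegral_indicator hs, withDensity_apply _ hs]

namespace ProbabilityTheory

section

variable {a a' r : ℝ}

theorem gammaPDF_const_mul (hr : 0 ≤ r) {c : ℝ} (hc : 0 < c) (x : ℝ) :
    gammaPDF a (r / c) (c * x) = ENNReal.ofReal |c⁻¹| * gammaPDF a r x := by
  rcases lt_or_ge x 0 with hx | hx
  · rw [gammaPDF_of_neg hx, gammaPDF_of_neg (mul_neg_of_pos_of_neg hc hx), mul_zero]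
  rw [gammaPDF_of_nonneg (mul_nonneg hc.le hx), gammaPDF_of_nonneg hx,
    ← ENNReal.ofReal_mul (abs_nonneg _), abs_of_pos (inv_pos.mpr hc),
    Real.div_rpow hr hc.le, Real.mul_rpow hc.le hx, show r / c * (c * x) = r * x by field_simp,
    show c ^ a = c ^ (a - 1) * c by rw [← Real.rpow_add_one hc.ne']; ring_nf]
  have : 0 < c ^ (a - 1) := Real.rpow_pos_of_pos hc _
  congr 1
  field_simp

theorem gammaMeasure_map_const_mul (hr : 0 ≤ r) {c : ℝ} (hc : 0 < c) :
    (gammaMeasure a r).map (c * ·) = gammaMeasure a (r / c) :=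
  Real.map_const_mul_withDensity hc.ne' (gammaPDF_const_mul hr hc)

theorem gammaPDF_mul_gammaPDF_sub_eq_mul_betaPDF (ha : 0 < a) (ha' : 0 < a') (hr : 0 < r)
    {z : ℝ} (hz : 0 < z) {s : ℝ} (hs0 : s ≠ 0) (hs1 : s ≠ 1) :
    ENNReal.ofReal z * (gammaPDF a r (z * s) * gammaPDF a' r (z - z * s)) =
      gammaPDF (a + a') r z * betaPDF a a' s := by
  rcases lt_or_gt_of_ne hs0 with hs | hs
  · rw [gammaPDF_of_neg (mul_neg_of_pos_of_neg hz hs), betaPDF_eq_zero_of_nonpos hs.le]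
    simp
  rcases lt_or_gt_of_ne hs1.symm with hs' | hs'
  · rw [gammaPDF_of_neg (show z - z * s < 0 by nlinarith), betaPDF_eq_zero_of_one_le hs'.le]
    simp
  rw [gammaPDF_of_nonneg (by positivity), gammaPDF_of_nonneg (by nlinarith),
    gammaPDF_of_nonneg hz.le, betaPDF_of_pos_lt_one hs hs', ← ENNReal.ofReal_mul (by positivity),
    ← ENNReal.ofReal_mul hz.le, ← ENNReal.ofReal_mul (by positivity)]
  congr 1
  have hΓa := Real.Gamma_pos_of_pos ha
  have hΓa' := Real.Gamma_pos_of_pos ha'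
  have hΓ := Real.Gamma_pos_of_pos (add_pos ha ha')
  rw [show z - z * s = z * (1 - s) by ring, Real.mul_rpow hz.le hs.le,
    Real.mul_rpow hz.le (by linarith), Real.rpow_add hr,
    show z ^ (a + a' - 1) = z ^ (a - 1) * z ^ (a' - 1) * z by
      rw [← Real.rpow_add hz, ← Real.rpow_add_one hz.ne']; ring_nf,
    show Real.exp (-(r * z)) = Real.exp (-(r * (z * s))) * Real.exp (-(r * (z * (1 - s)))) by
      rw [← Real.exp_add]; ring_nf, beta]
  field_simp

theorem lconvolution_gammaPDF_ae_eq (ha : 0 < a) (ha' : 0 < a') (hr : 0 < r) :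
    gammaPDF a r ⋆ₗ gammaPDF a' r =ᵐ[volume] gammaPDF (a + a') r := by
  filter_upwards [volume.ae_ne (0 : ℝ)] with z hz
  rw [lconvolution_def]
  rcases lt_or_gt_of_ne hz with hz | hz
  · have hvanish (y : ℝ) : gammaPDF a r y * gammaPDF a' r (-y + z) = 0 := by
      rcases lt_or_ge y 0 with hy | hy
      · rw [gammaPDF_of_neg hy, zero_mul]
      · rw [gammaPDF_of_neg (x := -y + z) (by linarith), mul_zero]
    simp only [hvanish, lintegral_zero, gammaPDF_of_neg hz]
  have hrescale : ENNReal.ofReal z * ENNReal.ofReal |z⁻¹| = 1 := by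
    rw [← ENNReal.ofReal_mul hz.le, abs_of_pos (inv_pos.mpr hz), mul_inv_cancel₀ hz.ne',
      ENNReal.ofReal_one]
  have hbeta : ∀ᵐ s, ENNReal.ofReal z * (gammaPDF a r (z * s) * gammaPDF a' r (-(z * s) + z)) =
      gammaPDF (a + a') r z * betaPDF a a' s := by
    filter_upwards [volume.ae_ne (0 : ℝ), volume.ae_ne (1 : ℝ)] with s hs0 hs1
    rw [neg_add_eq_sub]
    exact gammaPDF_mul_gammaPDF_sub_eq_mul_betaPDF ha ha' hr hz hs0 hs1
  calc ∫⁻ y, gammaPDF a r y * gammaPDF a' r (-y + z)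
      = ENNReal.ofReal z * ∫⁻ s, gammaPDF a r (z * s) * gammaPDF a' r (-(z * s) + z) := by
        rw [Real.lintegral_comp_mul_left hz.ne' fun y ↦ gammaPDF a r y * gammaPDF a' r (-y + z),
          ← mul_assoc, hrescale, one_mul]
    _ = ∫⁻ s, gammaPDF (a + a') r z * betaPDF a a' s := by
        rw [← lintegral_const_mul' _ _ ENNReal.ofReal_ne_top]
        exact lintegral_congr_ae hbeta
    _ = gammaPDF (a + a') r z := by
        rw [lintegral_const_mul (f := betaPDF a a') _ (measurable_betaPDFReal a a').ennreal_ofReal,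
          lintegral_betaPDF_eq_one ha ha', mul_one]

theorem gammaMeasure_conv_gammaMeasure (ha : 0 < a) (ha' : 0 < a') (hr : 0 < r) :
    gammaMeasure a r ∗ gammaMeasure a' r = gammaMeasure (a + a') r := by
  rw [gammaMeasure, gammaMeasure, conv_withDensity_eq_lconvolution (f := gammaPDF a r)
    (g := gammaPDF a' r) (measurable_gammaPDFReal a r).ennreal_ofReal
    (measurable_gammaPDFReal a' r).ennreal_ofReal]
  exact withDensity_congr_ae (lconvolution_gammaPDF_ae_eq ha ha' hr)

end

theorem iIndepFun.hasLaw_sum_gammaMeasure {Ω ι : Type*} {mΩ : MeasurableSpace Ω}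
    {P : Measure Ω} {X : ι → Ω → ℝ} {a : ι → ℝ} {r : ℝ} (hindep : iIndepFun X P)
    (hX : ∀ i, HasLaw (X i) (gammaMeasure (a i) r) P) (ha : ∀ i, 0 < a i) (hr : 0 < r)
    {s : Finset ι} (hs : s.Nonempty) :
    HasLaw (fun ω ↦ ∑ i ∈ s, X i ω) (gammaMeasure (∑ i ∈ s, a i) r) P := by
  induction hs using Finset.Nonempty.cons_induction with
  | singleton i => simpa using hX i
  | cons i s hi hs ih =>
    have hsa : 0 < ∑ j ∈ s, a j := Finset.sum_pos (fun j _ ↦ ha j) hs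
    have := isProbabilityMeasure_gammaMeasure (ha i) hr
    have := isProbabilityMeasure_gammaMeasure hsa hr
    have hindep_i : IndepFun (X i) (fun ω ↦ ∑ j ∈ s, X j ω) P := by
      simpa only [Finset.sum_fn] using
        (hindep.indepFun_finsetSum_of_notMem₀ (fun j ↦ (hX j).aemeasurable) hi).symm
    simp only [Finset.sum_cons]
    rw [← gammaMeasure_conv_gammaMeasure (ha i) hsa hr]
    exact hindep_i.hasLaw_fun_add (hX i) ih

noncomputable def lowerIncompleteGamma (s x : ℝ) : ℝ :=
  ∫ t in (0 : ℝ)..x, t ^ (s - 1) * Real.exp (-t)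

theorem lowerIncompleteGamma_mul (s : ℝ) {r : ℝ} (hr : 0 < r) {c : ℝ} (hc : 0 ≤ c) :
    lowerIncompleteGamma s (r * c) =
      r ^ s * ∫ x in (0 : ℝ)..c, x ^ (s - 1) * Real.exp (-(r * x)) := by
  calc lowerIncompleteGamma s (r * c)
      = r * ∫ x in (0 : ℝ)..c, (r * x) ^ (s - 1) * Real.exp (-(r * x)) := by
        rw [intervalIntegral.integral_comp_mul_left (fun t ↦ t ^ (s - 1) * Real.exp (-t)) hr.ne',
          mul_zero, smul_eq_mul, mul_inv_cancel_left₀ hr.ne', lowerIncompleteGamma]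
    _ = r * ∫ x in (0 : ℝ)..c, r ^ (s - 1) * (x ^ (s - 1) * Real.exp (-(r * x))) := by
        congr 1
        refine intervalIntegral.integral_congr fun x hx ↦ ?_
        rw [uIcc_of_le hc] at hx
        rw [Real.mul_rpow hr.le hx.1, mul_assoc]
    _ = r ^ s * ∫ x in (0 : ℝ)..c, x ^ (s - 1) * Real.exp (-(r * x)) := by
        rw [intervalIntegral.integral_const_mul, Real.rpow_sub_one hr.ne']
        field_simp

theorem gammaMeasure_Iic {s r : ℝ} (hs : 0 < s) (hr : 0 < r) {c : ℝ} (hc : 0 ≤ c) :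
    gammaMeasure s r (Iic c) =
      ENNReal.ofReal (1 / Real.Gamma s * lowerIncompleteGamma s (r * c)) := by
  have := isProbabilityMeasure_gammaMeasure hs hr
  rw [← ofReal_cdf, cdf_gammaMeasure_eq_integral hs hr]
  congr 1
  calc ∫ x in Iic c, gammaPDFReal s r x
      = ∫ x in Ioc 0 c, gammaPDFReal s r x := by
        refine setIntegral_eq_of_subset_of_ae_sdiff_eq_zero measurableSet_Iic.nullMeasurableSet
          Ioc_subset_Iic_self ?_
        filter_upwards [volume.ae_ne (0 : ℝ)] with x hx0 hx
        have hx : x < 0 := (not_lt.mp fun h ↦ hx.2 ⟨h, hx.1⟩).lt_of_ne hx0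
        simp [gammaPDFReal, hx.not_ge]
    _ = ∫ x in (0 : ℝ)..c, r ^ s / Real.Gamma s * (x ^ (s - 1) * Real.exp (-(r * x))) := by
        rw [← intervalIntegral.integral_of_le hc]
        refine intervalIntegral.integral_congr fun x hx ↦ ?_
        rw [uIcc_of_le hc] at hx
        simp only [gammaPDFReal, if_pos hx.1, mul_assoc]
    _ = 1 / Real.Gamma s * lowerIncompleteGamma s (r * c) := by
        rw [intervalIntegral.integral_const_mul, lowerIncompleteGamma_mul s hr hc]
        ring

end ProbabilityTheory

-- `_root_.gammaPDF` vanishes at `0`, Mathlib's `gammaPDF` does not when `a = 1`.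
theorem withDensity_ofReal_gammaPDF (a b : ℝ) :
    volume.withDensity (fun x ↦ ENNReal.ofReal (_root_.gammaPDF a b x)) = gammaMeasure a b := by
  refine withDensity_congr_ae ?_
  filter_upwards [volume.ae_ne (0 : ℝ)] with x hx
  rcases lt_or_gt_of_ne hx with hx | hx
  · simp [_root_.gammaPDF, hx.not_gt, gammaPDF_of_neg hx]
  · simp [_root_.gammaPDF, hx, gammaPDF_of_nonneg hx.le]

noncomputable def harvestedPower (A B Ps x : ℝ) : ℝ :=
  Ps * (1 + Real.exp (A * B)) / (Real.exp (A * B) * (1 + Real.exp (-(A * (x - B))))) -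
    Ps * Real.exp (-(A * B))

theorem harvestedPower_zero (A B Ps : ℝ) : harvestedPower A B Ps 0 = 0 := by
  have := Real.exp_pos (A * B)
  rw [harvestedPower, zero_sub, mul_neg, neg_neg, Real.exp_neg]
  field_simp
  ring

theorem harvestedPower_le_iff {A B Ps q x : ℝ} (hA : 0 < A) (hq0 : 0 ≤ q) (hq1 : q < Ps) :
    harvestedPower A B Ps x ≤ q ↔
      x ≤ (A * B - Real.log (Ps * (1 + Real.exp (A * B)) /
        (Real.exp (A * B) * (q + Ps * Real.exp (-(A * B)))) - 1)) / A := by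
  have hE : 0 < Real.exp (A * B) := Real.exp_pos _
  have hm : 0 < Real.exp (-(A * (x - B))) := Real.exp_pos _
  have hPs : 0 < Ps := hq0.trans_lt hq1
  have hD : Real.exp (A * B) * (q + Ps * Real.exp (-(A * B))) = Real.exp (A * B) * q + Ps := by
    rw [Real.exp_neg]
    field_simp
  set K := Ps * (1 + Real.exp (A * B)) / (Real.exp (A * B) * (q + Ps * Real.exp (-(A * B))))
  have hK : 1 < K := by
    rw [one_lt_div (by positivity), hD]
    nlinarith
  calc harvestedPower A B Ps x ≤ q
      ↔ K ≤ 1 + Real.exp (-(A * (x - B))) := by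
        rw [harvestedPower, sub_le_iff_le_add, div_le_iff₀ (by positivity),
          div_le_iff₀ (by positivity)]
        constructor <;> intro h <;> linarith
    _ ↔ Real.log (K - 1) ≤ -(A * (x - B)) := by
        rw [Real.log_le_iff_le_exp (by linarith)]
        constructor <;> intro h <;> linarith
    _ ↔ x ≤ (A * B - Real.log (K - 1)) / A := by
        rw [le_div_iff₀ hA]
        constructor <;> intro h <;> linarith

theorem harvestedPower_miso_cdf_general {Ω : Type*} [MeasureSpace Ω] (L : ℕ) (hL : 1 ≤ L)
    (a b l p : Fin L → ℝ) (A B Ps β : ℝ)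
    (ha : ∀ i, 0 < a i) (hb : ∀ i, 0 < b i) (hl : ∀ i, 0 < l i) (hp : ∀ i, 0 < p i)
    (hA : 0 < A) (hβ : 0 < β)
    (hratio : ∀ i, b i / (l i * p i) = β)
    (G : Fin L → Ω → ℝ) (hG : ∀ i, Measurable (G i))
    (hindep : iIndepFun G ℙ)
    (hlaw : ∀ i, Measure.map (G i) ℙ =
      volume.withDensity fun x => ENNReal.ofReal (gammaPDF (a i) (b i) x))
    (q : ℝ) (hq0 : 0 < q) (hq1 : q < Ps) :
    ℙ {ω | Ps * (1 + Real.exp (A * B)) /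
            (Real.exp (A * B) *
              (1 + Real.exp (-(A * ((∑ i, l i * p i * G i ω) - B))))) -
          Ps * Real.exp (-(A * B)) ≤ q} =
      ENNReal.ofReal ((1 / Real.Gamma (∑ i, a i)) *
        ∫ t in (0 : ℝ)..(-(β / A) *
            (Real.log (Ps * (1 + Real.exp (A * B)) /
              (Real.exp (A * B) * (q + Ps * Real.exp (-(A * B)))) - 1) - A * B)),
          t ^ ((∑ i, a i) - 1) * Real.exp (-t)) := by
  set c := (A * B - Real.log (Ps * (1 + Real.exp (A * B)) /
    (Real.exp (A * B) * (q + Ps * Real.exp (-(A * B)))) - 1)) / A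
  have hc : 0 ≤ c :=
    (harvestedPower_le_iff hA hq0.le hq1).mp (by rw [harvestedPower_zero]; exact hq0.le)
  have hscaled (i : Fin L) : HasLaw (fun ω ↦ l i * p i * G i ω) (gammaMeasure (a i) β) ℙ := by
    have hGi : HasLaw (G i) (gammaMeasure (a i) (b i)) ℙ :=
      ⟨(hG i).aemeasurable, by rw [hlaw i, withDensity_ofReal_gammaPDF]⟩
    have hmul : HasLaw (l i * p i * ·) (gammaMeasure (a i) β) (gammaMeasure (a i) (b i)) :=
      ⟨(measurable_const_mul _).aemeasurable, by
        rw [gammaMeasure_map_const_mul (hb i).le (mul_pos (hl i) (hp i)), hratio i]⟩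
    exact hmul.fun_comp hGi
  have hindep_scaled : iIndepFun (fun i ω ↦ l i * p i * G i ω) ℙ :=
    hindep.comp (fun i x ↦ l i * p i * x) fun i ↦ measurable_const_mul _
  have huniv : (Finset.univ : Finset (Fin L)).Nonempty := ⟨⟨0, hL⟩, Finset.mem_univ _⟩
  have hsum := hindep_scaled.hasLaw_sum_gammaMeasure hscaled ha hβ huniv
  have hsa : 0 < ∑ i, a i := Finset.sum_pos (fun i _ ↦ ha i) huniv
  calc _ = ℙ {ω | ∑ i, l i * p i * G i ω ≤ c} :=
        congrArg ℙ (Set.ext fun ω ↦ harvestedPower_le_iff hA hq0.le hq1)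
    _ = gammaMeasure (∑ i, a i) β (Iic c) := hsum.measure_eq measurableSet_Iic
    _ = _ := by
        rw [gammaMeasure_Iic hsa hβ hc, lowerIncompleteGamma]
        congr 3
        ring

/-- **CDF of the harvested power in the nonlinear MISO energy-harvesting model with
equal ratios.** If the `G_i ~ Gamma(a_i, b_i)` are independent, the ratios
`b_i/(l_i p_i)` all equal `β > 0`, `sa = Σ a_i`, and
`Q = P_s(1+e^{AB})/(e^{AB}(1+e^{-A(Σ l_i p_i G_i - B)})) - P_s e^{-AB}`, then for
every `0 < q < P_s`,
`P(Q ≤ q) = (1/Γ(sa)) γ(sa, -(β/A)(ln(P_s(1+e^{AB})/(e^{AB}(q+P_s e^{-AB})) - 1) - AB))`. -/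
theorem harvestedPower_miso_cdf {Ω : Type*} [MeasureSpace Ω]
    [IsProbabilityMeasure (ℙ : Measure Ω)] (L : ℕ) (hL : 1 ≤ L)
    (a b l p : Fin L → ℝ) (A B Ps β : ℝ)
    (ha : ∀ i, 0 < a i) (hb : ∀ i, 0 < b i) (hl : ∀ i, 0 < l i) (hp : ∀ i, 0 < p i)
    (hA : 0 < A) (hB : 0 < B) (hPs : 0 < Ps) (hβ : 0 < β)
    (hratio : ∀ i, b i / (l i * p i) = β)
    (G : Fin L → Ω → ℝ) (hG : ∀ i, Measurable (G i))
    (hindep : iIndepFun G ℙ)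
    (hlaw : ∀ i, Measure.map (G i) ℙ =
      volume.withDensity fun x => ENNReal.ofReal (gammaPDF (a i) (b i) x))
    (q : ℝ) (hq0 : 0 < q) (hq1 : q < Ps) :
    ℙ {ω | Ps * (1 + Real.exp (A * B)) /
            (Real.exp (A * B) *
              (1 + Real.exp (-(A * ((∑ i, l i * p i * G i ω) - B))))) -
          Ps * Real.exp (-(A * B)) ≤ q} =
      ENNReal.ofReal ((1 / Real.Gamma (∑ i, a i)) *
        ∫ t in (0 : ℝ)..(-(β / A) *
            (Real.log (Ps * (1 + Real.exp (A * B)) /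
              (Real.exp (A * B) * (q + Ps * Real.exp (-(A * B)))) - 1) - A * B)),
          t ^ ((∑ i, a i) - 1) * Real.exp (-t)) :=
  harvestedPower_miso_cdf_general L hL a b l p A B Ps β ha hb hl hp hA hβ hratio G hG hindep hlaw q
    hq0 hq1
end
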